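/- arXiv:2111.10141 — 4 statements merged into one kernel-verified Lean document; each statement's English description precedes it below -/
import Mathlib

section
/- The variable dimensional Hausdorff content is outer regular: for any set E ⊆ ℝ^n, H_∞^{β(·)}(E) = inf { H_∞^{β(·)}(U) : E ⊆ U, U open }. -/
open MeasureTheory Metric

/-- Variable dimensional Hausdorff content. -/
noncomputable def hContent {n : ℕ} (β : EuclideanSpace ℝ (Fin n) → ℝ)
    (A : Set (EuclideanSpace ℝ (Fin n))) : ENNReal :=
  ⨅ (c : ℕ → EuclideanSpace ℝ (Fin n) × ℝ)
    (_ : A ⊆ ⋃ i, Metric.ball (c i).1 (c i).2),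
    ∑' i, ENNReal.ofReal ((c i).2 ^ β (c i).1)

theorem hContent_outer_regular {n : ℕ} (β : EuclideanSpace ℝ (Fin n) → ℝ)
    (hβ : ∀ x, 0 < β x ∧ β x ≤ n)
    (E : Set (EuclideanSpace ℝ (Fin n))) :
    hContent β E
      = ⨅ (U : Set (EuclideanSpace ℝ (Fin n))) (_ : IsOpen U) (_ : E ⊆ U),
          hContent β U := by
  simp only [hContent]
  apply le_antisymm
  · refine le_iInf fun U => le_iInf fun hU => le_iInf fun hEU => ?_
    exact le_iInf₂ fun c hc => iInf₂_le c (hEU.trans hc)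
  · refine le_iInf₂ fun c hc => ?_
    refine iInf_le_of_le (⋃ i, Metric.ball (c i).1 (c i).2) ?_
    refine iInf_le_of_le (isOpen_iUnion fun i => isOpen_ball) ?_
    refine iInf_le_of_le hc ?_
    exact iInf₂_le c Set.Subset.rfl
end

section
/- If (K_i) is a decreasing sequence of compact subsets of ℝ^n, then H_∞^{β(·)}(⋂_{i=1}^∞ K_i) = lim_{i→∞} H_∞^{β(·)}(K_i). -/
open MeasureTheory Metric

lemma hContent_mono {n : ℕ} (β : EuclideanSpace ℝ (Fin n) → ℝ)
    {A B : Set (EuclideanSpace ℝ (Fin n))} (h : A ⊆ B) :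
    hContent β A ≤ hContent β B := by
  refine le_iInf₂ fun c hc => iInf₂_le c (h.trans hc)

theorem hContent_compact_decreasing {n : ℕ} (β : EuclideanSpace ℝ (Fin n) → ℝ)
    (hβ : ∀ x, 0 < β x ∧ β x ≤ n)
    (K : ℕ → Set (EuclideanSpace ℝ (Fin n)))
    (hK : ∀ i, IsCompact (K i)) (hdec : ∀ i, K (i + 1) ⊆ K i) :
    Filter.Tendsto (fun i => hContent β (K i)) Filter.atTop
      (nhds (hContent β (⋂ i, K i))) := by
  have hanti : Antitone K := antitone_nat_of_succ_le hdec
  have key : (⨅ i, hContent β (K i)) = hContent β (⋂ i, K i) := by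
    apply le_antisymm
    · refine le_iInf₂ fun c hc => ?_
      set U : Set (EuclideanSpace ℝ (Fin n)) := ⋃ i, Metric.ball (c i).1 (c i).2 with hU
      have hUopen : IsOpen U := isOpen_iUnion fun i => isOpen_ball
      -- find i with K i ⊆ U
      have : ∃ i, K i ⊆ U := by
        by_contra h
        push_neg at h
        have hne : ∀ i, (K i \ U).Nonempty := fun i => Set.diff_nonempty.2 (h i)
        have hdir : Directed (· ⊇ ·) (fun i => K i \ U) := by
          intro i j
          exact ⟨max i j, Set.diff_subset_diff_left (hanti (le_max_left i j)),
            Set.diff_subset_diff_left (hanti (le_max_right i j))⟩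
        have hcomp : ∀ i, IsCompact (K i \ U) := fun i => (hK i).diff hUopen
        have hcl : ∀ i, IsClosed (K i \ U) := fun i => (hK i).isClosed.sdiff hUopen
        obtain ⟨x, hx⟩ :=
          IsCompact.nonempty_iInter_of_directed_nonempty_isCompact_isClosed _ hdir hne hcomp hcl
        simp only [Set.mem_iInter, Set.mem_diff] at hx
        exact (hx 0).2 (hc (Set.mem_iInter.2 fun i => (hx i).1))
      obtain ⟨i, hi⟩ := this
      exact iInf_le_of_le i (iInf₂_le c hi)
    · exact le_iInf fun i => hContent_mono β (Set.iInter_subset K i)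
  rw [← key]
  exact tendsto_atTop_iInf fun i j hij => hContent_mono β (hanti hij)
end

section
/- If Ω ⊆ ℝ^n is open and α: Ω → (0, n] is continuous, then the variable order fractional maximal function M_{α(·)} f is lower semicontinuous on Ω: for every t > 0, the set {x ∈ Ω : M_{α(·)} f(x) > t} is open in ℝ^n. -/
open MeasureTheory Metric

/-- Variable order fractional maximal function. -/
noncomputable def fracMax {n : ℕ} (Ω : Set (EuclideanSpace ℝ (Fin n)))
    (α : EuclideanSpace ℝ (Fin n) → ℝ) (f : EuclideanSpace ℝ (Fin n) → ℝ)
    (x : EuclideanSpace ℝ (Fin n)) : ENNReal :=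
  ⨆ (r : ℝ) (_ : 0 < r),
    (ENNReal.ofReal (r ^ α x) / volume (Metric.ball x r)) *
      ∫⁻ y in Metric.ball x r ∩ Ω, ENNReal.ofReal |f y|

lemma fracMax_coeff_eq {n : ℕ} (x : EuclideanSpace ℝ (Fin n)) {ρ : ℝ} (hρ : 0 < ρ)
    (a : ℝ) (I : ENNReal) :
    ENNReal.ofReal (ρ ^ a) / volume (Metric.ball x ρ) * I
      = ENNReal.ofReal (ρ ^ (a - (n : ℝ)))
          * (I / volume (Metric.ball (0 : EuclideanSpace ℝ (Fin n)) 1)) := by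
  rcases Nat.eq_zero_or_pos n with hn | hn
  · subst hn
    have hsub : Subsingleton (EuclideanSpace ℝ (Fin 0)) := by
      constructor; intro u v; ext i; exact absurd i.2 (by omega)
    have hb : ∀ (c : EuclideanSpace ℝ (Fin 0)) {s : ℝ}, 0 < s →
        Metric.ball c s = Set.univ := by
      intro c s hs; ext z; simp [Metric.mem_ball, @Subsingleton.elim _ hsub z c, hs]
    rw [hb x hρ, hb 0 one_pos]
    norm_num
    simp only [div_eq_mul_inv]
    ring
  haveI : Nontrivial (EuclideanSpace ℝ (Fin n)) := by
    apply Module.nontrivial_of_finrank_pos (R := ℝ)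
    rw [finrank_euclideanSpace_fin]; omega
  have hballs : volume (Metric.ball x ρ)
      = ENNReal.ofReal (ρ ^ n) * volume (Metric.ball (0 : EuclideanSpace ℝ (Fin n)) 1) := by
    rw [Measure.addHaar_ball volume x hρ.le, finrank_euclideanSpace_fin]
  rw [hballs]
  have h1 : ρ ^ (a - (n : ℝ)) = ρ ^ a / ρ ^ (n : ℕ) := by
    rw [Real.rpow_sub hρ, Real.rpow_natCast]
  rw [h1, ENNReal.ofReal_div_of_pos (pow_pos hρ n)]
  rw [div_eq_mul_inv, div_eq_mul_inv, div_eq_mul_inv,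
    ENNReal.mul_inv (Or.inl (ENNReal.ofReal_pos.mpr (pow_pos hρ n)).ne') (Or.inl ENNReal.ofReal_ne_top)]
  ring

theorem fracMax_lowerSemicontinuous {n : ℕ}
    (Ω : Set (EuclideanSpace ℝ (Fin n))) (hΩ : IsOpen Ω)
    (α : EuclideanSpace ℝ (Fin n) → ℝ) (hαc : ContinuousOn α Ω)
    (hα : ∀ x ∈ Ω, 0 < α x ∧ α x ≤ n)
    (f : EuclideanSpace ℝ (Fin n) → ℝ)
    (hf : LocallyIntegrableOn f Ω)
    (t : ℝ) (ht : 0 < t) :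
    IsOpen {x | x ∈ Ω ∧ fracMax Ω α f x > ENNReal.ofReal t} := by
  rw [Metric.isOpen_iff]
  rintro x ⟨hxΩ, hMx⟩
  rw [gt_iff_lt, fracMax] at hMx
  simp only [lt_iSup_iff] at hMx
  obtain ⟨r, hr, hterm⟩ := hMx
  rw [fracMax_coeff_eq x hr (α x)] at hterm
  set I := ∫⁻ y in Metric.ball x r ∩ Ω, ENNReal.ofReal |f y| with hIdef
  set K := I / volume (Metric.ball (0 : EuclideanSpace ℝ (Fin n)) 1) with hKdef
  obtain ⟨δΩ, hδΩ, hballΩ⟩ := Metric.isOpen_iff.mp hΩ x hxΩ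
  have key : ∃ δ > 0, Metric.ball x δ ⊆ Ω ∧
      ∀ y ∈ Metric.ball x δ,
        ENNReal.ofReal t < ENNReal.ofReal ((r + δ) ^ (α y - (n : ℝ))) * K := by
    by_cases hK : K = ⊤
    · refine ⟨δΩ, hδΩ, hballΩ, fun y _ => ?_⟩
      rw [hK, ENNReal.mul_top
        (ENNReal.ofReal_pos.mpr (Real.rpow_pos_of_pos (by linarith) _)).ne']
      exact ENNReal.ofReal_lt_top.trans_le le_top
    · have hKre : K = ENNReal.ofReal K.toReal := (ENNReal.ofReal_toReal hK).symm
      have hreal : t < r ^ (α x - (n : ℝ)) * K.toReal := by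
        rw [hKre, ← ENNReal.ofReal_mul (Real.rpow_nonneg hr.le _)] at hterm
        exact (ENNReal.ofReal_lt_ofReal_iff_of_nonneg ht.le).mp hterm
      have hα' : ContinuousAt α x := hαc.continuousAt (hΩ.mem_nhds hxΩ)
      have hcont : ContinuousAt
          (fun p : ℝ × EuclideanSpace ℝ (Fin n) =>
            (r + p.1) ^ (α p.2 - (n : ℝ)) * K.toReal) (0, x) := by
        apply ContinuousAt.mul _ continuousAt_const
        apply ContinuousAt.rpow
        · exact continuousAt_const.add continuousAt_fst
        · exact (hα'.comp continuousAt_snd).sub continuousAt_const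
        · left; simpa using hr.ne'
      have hF0 : t < (r + (0 : ℝ)) ^ (α x - (n : ℝ)) * K.toReal := by simpa using hreal
      have ev : ∀ᶠ p : ℝ × EuclideanSpace ℝ (Fin n) in nhds (0, x),
          t < (r + p.1) ^ (α p.2 - (n : ℝ)) * K.toReal :=
        hcont.eventually (eventually_gt_nhds hF0)
      rw [Metric.eventually_nhds_iff] at ev
      obtain ⟨ε, hε, hev⟩ := ev
      have hδpos : (0 : ℝ) < min (ε / 2) δΩ := lt_min (by linarith) hδΩ
      refine ⟨min (ε / 2) δΩ, hδpos,
        (Metric.ball_subset_ball (min_le_right _ _)).trans hballΩ, fun y hy => ?_⟩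
      have hyd : dist y x < min (ε / 2) δΩ := mem_ball.mp hy
      have hp : dist ((min (ε / 2) δΩ, y) : ℝ × EuclideanSpace ℝ (Fin n)) (0, x) < ε := by
        rw [Prod.dist_eq]
        have h1 : dist (min (ε / 2) δΩ) 0 < ε := by
          rw [Real.dist_eq, sub_zero, abs_of_pos hδpos]
          calc min (ε / 2) δΩ ≤ ε / 2 := min_le_left _ _
            _ < ε := by linarith
        have h2 : dist y x < ε :=
          hyd.trans_le ((min_le_left _ _).trans (by linarith))
        exact max_lt h1 h2
      have hFy := hev hp
      rw [hKre, ← ENNReal.ofReal_mul (Real.rpow_nonneg (by positivity) _)]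
      exact (ENNReal.ofReal_lt_ofReal_iff (ht.trans hFy)).mpr hFy
  obtain ⟨δ, hδ, hδΩ', hδK⟩ := key
  refine ⟨δ, hδ, fun y hy => ⟨hδΩ' hy, ?_⟩⟩
  have hρ : (0 : ℝ) < r + δ := by linarith
  have hsub : Metric.ball x r ∩ Ω ⊆ Metric.ball y (r + δ) ∩ Ω := by
    rintro z ⟨hz1, hz2⟩
    refine ⟨mem_ball.mpr ?_, hz2⟩
    have h1 : dist z x < r := mem_ball.mp hz1
    have h2 : dist y x < δ := mem_ball.mp hy
    calc dist z y ≤ dist z x + dist x y := dist_triangle _ _ _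
      _ < r + δ := by rw [dist_comm x y]; linarith
  have hIy : I ≤ ∫⁻ z in Metric.ball y (r + δ) ∩ Ω, ENNReal.ofReal |f z| :=
    lintegral_mono_set hsub
  have hvol : volume (Metric.ball y (r + δ)) = volume (Metric.ball x (r + δ)) := by
    rw [Measure.addHaar_ball_center volume y, Measure.addHaar_ball_center volume x]
  have hle : ENNReal.ofReal ((r + δ) ^ (α y - (n : ℝ))) * K ≤ fracMax Ω α f y := by
    rw [← fracMax_coeff_eq x hρ (α y) I]
    calc ENNReal.ofReal ((r + δ) ^ α y) / volume (Metric.ball x (r + δ)) * I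
        ≤ ENNReal.ofReal ((r + δ) ^ α y) / volume (Metric.ball y (r + δ)) *
            ∫⁻ z in Metric.ball y (r + δ) ∩ Ω, ENNReal.ofReal |f z| := by
          rw [hvol]; exact mul_le_mul_right hIy _
      _ ≤ fracMax Ω α f y := le_iSup₂_of_le (r + δ) hρ le_rfl
  exact lt_of_lt_of_le (hδK y hy) hle
end

section
/- (Chaining lemma for s(·)-John domains) Let D ⊆ ℝ^n, n ≥ 2, be an s(·)-John domain with John constants α, β and John center x₀. Then for every x ∈ D \ B(x₀, dist(x₀, ∂D)) there exists a sequence of balls B(x_i, r_i) with B(x_i, 2r_i) ⊆ D for all i ≥ 0, such that: (1) B₀ = B(x₀, dist(x₀, ∂D)/2); (2) dist(x, B_i)^{s(x)} ≤ K r_i for a constant K = K(α, β, dist(x₀, ∂D)) and r_i → 0 as i → ∞; (3) no point of D belongs to more than N = N(n) of the balls B(x_i, r_i); (4) |B(x_i, r_i) ∪ B(x_{i+1}, r_{i+1})| ≤ M |B(x_i, r_i) ∩ B(x_{i+1}, r_{i+1})| for a constant M = M(n). -/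
/-!
Walk back along the John curve from `x₀` towards `x`, each time jumping to the first point of
the curve within a quarter of the current boundary distance. The balls of radius half the
boundary distance around the points reached are Whitney-type balls; consecutive ones are
comparable, and as each later point lies outside the quarter ball of every earlier one, the
centres are separated at the scale of the balls, so volume packing bounds the overlap. The walk
stops after finitely many steps because the boundary distance is bounded below along the compact
curve, and the John condition at the points reached gives (2). From the last ball the chain
continues with a geometric tower of balls shrinking to `x`.
-/

open MeasureTheory Metric

/-- `D` is an `s(·)`-John domain with John constants `a ≤ b` and John center `x₀`:
every point of `D` is joined to `x₀` by a rectifiable curve, parametrized by arc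
length (hence `1`-Lipschitz), of length at most `b`, along which
`t^{s(x)} ≤ (b/a) dist(γ t, ∂D)`. -/
def IsJohnDomain {n : ℕ} (D : Set (EuclideanSpace ℝ (Fin n)))
    (s : EuclideanSpace ℝ (Fin n) → ℝ) (a b : ℝ)
    (x₀ : EuclideanSpace ℝ (Fin n)) : Prop :=
  IsOpen D ∧ IsConnected D ∧ Bornology.IsBounded D ∧ 0 < a ∧ a ≤ b ∧ x₀ ∈ D ∧
    ∀ x ∈ D, ∃ ℓ : ℝ, 0 ≤ ℓ ∧ ℓ ≤ b ∧
      ∃ γ : ℝ → EuclideanSpace ℝ (Fin n),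
        γ 0 = x ∧ γ ℓ = x₀ ∧ LipschitzOnWith 1 γ (Set.Icc 0 ℓ) ∧
        (∀ t ∈ Set.Icc 0 ℓ, γ t ∈ D) ∧
        (∀ t ∈ Set.Icc 0 ℓ, t ^ s x ≤ (b / a) * Metric.infDist (γ t) (frontier D))

open Set Filter Topology

theorem Metric.infDist_frontier_pos {X : Type*} [PseudoMetricSpace X] {D : Set X} (hD : IsOpen D)
    (hF : (frontier D).Nonempty) {z : X} (hz : z ∈ D) : 0 < infDist z (frontier D) :=
  (isClosed_frontier.notMem_iff_infDist_pos hF).1 fun h => h.2 (hD.interior_eq.symm ▸ hz)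

section NormedSpace

variable {E : Type*} [NormedAddCommGroup E] [NormedSpace ℝ E]

theorem Metric.ball_subset_of_le_infDist_frontier {D : Set E} (hD : IsOpen D) {z : E} (hz : z ∈ D)
    {ρ : ℝ} (hρ : ρ ≤ infDist z (frontier D)) : ball z ρ ⊆ D := by
  rcases le_or_gt ρ 0 with hρ0 | hρ0
  · simp [ball_eq_empty.2 hρ0]
  refine (convex_ball z ρ).isPreconnected.subset_of_closure_inter_subset hD
    ⟨z, mem_ball_self hρ0, hz⟩ fun w ⟨hwD, hwB⟩ => by_contra fun hw => ?_
  have hwF : w ∈ frontier D := ⟨hwD, by rwa [hD.interior_eq]⟩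
  exact disjoint_ball_infDist.notMem_of_mem_left (ball_subset_ball hρ hwB) hwF

theorem frontier_nonempty_of_isBounded [Nontrivial E] {D : Set E} (hne : D.Nonempty)
    (hb : Bornology.IsBounded D) : (frontier D).Nonempty :=
  nonempty_frontier_iff.2 ⟨hne, fun h => NormedSpace.unbounded_univ ℝ E (h ▸ hb)⟩

variable [MeasurableSpace E] [BorelSpace E] [FiniteDimensional ℝ E] [Nontrivial E]

theorem measure_ball_union_le_mul_measure_ball_inter (μ : Measure E) [μ.IsAddHaarMeasure]
    {c c' : E} {r r' h κ : ℝ} (hh0 : 0 < h) (hh : dist c c' + h ≤ r) (hh' : h ≤ r')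
    (hr : r ≤ κ * h) (hr' : r' ≤ κ * h) :
    μ (ball c r ∪ ball c' r') ≤
      ENNReal.ofReal ((2 * κ) ^ Module.finrank ℝ E) * μ (ball c r ∩ ball c' r') := by
  have hdist := dist_nonneg (x := c) (y := c')
  have hκ : 0 ≤ 2 * κ := by nlinarith
  have hinter : ball c' h ⊆ ball c r ∩ ball c' r' := fun w hw =>
    ⟨by rw [mem_ball] at hw ⊢; linarith [dist_triangle w c' c, dist_comm c c'],
      ball_subset_ball hh' hw⟩
  have hunion : ball c r ∪ ball c' r' ⊆ ball c' ((2 * κ) * h) := by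
    rintro w (hw | hw) <;> rw [mem_ball] at hw ⊢
    · linarith [dist_triangle w c c']
    · linarith
  calc μ (ball c r ∪ ball c' r') ≤ μ (ball c' ((2 * κ) * h)) := measure_mono hunion
    _ = ENNReal.ofReal ((2 * κ) ^ Module.finrank ℝ E) * μ (ball c' h) := by
      rw [Measure.addHaar_ball_mul μ c' hκ, Measure.addHaar_ball_center μ c']
    _ ≤ _ := by gcongr

theorem Finset.card_le_of_dist_lt_of_le_dist {ι : Type*} (T : Finset ι) (z : ι → E) (y : E)
    {R ε : ℝ} (hR : 0 ≤ R) (hε : 0 < ε) (hz : ∀ i ∈ T, dist (z i) y < R)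
    (hsep : ∀ i ∈ T, ∀ j ∈ T, i ≠ j → 2 * ε ≤ dist (z i) (z j)) :
    (T.card : ℝ) ≤ ((R + ε) / ε) ^ Module.finrank ℝ E := by
  let μ : Measure E := Measure.addHaar
  have hdisj : (T : Set ι).PairwiseDisjoint fun i => ball (z i) ε := fun i hi j hj hij =>
    ball_disjoint_ball (by linarith [hsep i hi j hj hij])
  have hsub : ∀ i ∈ T, ball (z i) ε ⊆ ball y ((R + ε) / ε * ε) := fun i hi w hw => by
    rw [mem_ball] at hw ⊢
    rw [div_mul_cancel₀ _ hε.ne']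
    linarith [dist_triangle w (z i) y, hz i hi]
  have hvol : (T.card : ENNReal) * μ (ball (0 : E) ε) ≤
      ENNReal.ofReal (((R + ε) / ε) ^ Module.finrank ℝ E) * μ (ball (0 : E) ε) := by
    calc (T.card : ENNReal) * μ (ball (0 : E) ε) = ∑ i ∈ T, μ (ball (z i) ε) := by
          simp [Measure.addHaar_ball_center μ]
      _ = μ (⋃ i ∈ T, ball (z i) ε) :=
          (measure_biUnion_finset hdisj fun i _ => measurableSet_ball).symm
      _ ≤ μ (ball y ((R + ε) / ε * ε)) := measure_mono (iUnion₂_subset hsub)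
      _ = _ := by rw [Measure.addHaar_ball_mul μ y (by positivity), Measure.addHaar_ball_center μ]
  have hcard :=
    (ENNReal.mul_le_mul_iff_left (measure_ball_pos μ 0 hε).ne' measure_ball_lt_top.ne).1 hvol
  rwa [← ENNReal.ofReal_natCast, ENNReal.ofReal_le_ofReal_iff (by positivity)] at hcard

end NormedSpace

theorem Set.encard_le_of_forall_lt_add {S : Set ℕ} {k : ℕ} (h : ∀ i ∈ S, ∀ j ∈ S, j < i + k) :
    S.encard ≤ k := by
  rcases S.eq_empty_or_nonempty with rfl | hne
  · simp
  calc S.encard ≤ (Ico (sInf S) (sInf S + k)).encard :=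
        encard_mono fun j hj => ⟨Nat.sInf_le hj, h _ (Nat.sInf_mem hne) j hj⟩
    _ = k := by simp [encard_eq_coe_toFinset_card]

section SeqAppend

variable {α : Type*}

def seqAppend (m : ℕ) (u v : ℕ → α) (i : ℕ) : α :=
  if i ≤ m then u i else v (i - (m + 1))

variable {m : ℕ} {u v : ℕ → α}

theorem seqAppend_of_le {i : ℕ} (hi : i ≤ m) : seqAppend m u v i = u i := if_pos hi

theorem seqAppend_add (j : ℕ) : seqAppend m u v (j + (m + 1)) = v j := by
  rw [seqAppend, if_neg (by omega), Nat.add_sub_cancel]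

theorem forall_seqAppend {p : α → Prop} (hu : ∀ i ≤ m, p (u i)) (hv : ∀ j, p (v j)) (i : ℕ) :
    p (seqAppend m u v i) := by
  rcases le_or_gt i m with hi | hi
  · rw [seqAppend_of_le hi]
    exact hu i hi
  · obtain ⟨j, rfl⟩ : ∃ j, i = j + (m + 1) := ⟨i - (m + 1), by omega⟩
    rw [seqAppend_add]
    exact hv j

theorem forall_seqAppend_succ {p : α → α → Prop} (hu : ∀ i < m, p (u i) (u (i + 1)))
    (huv : p (u m) (v 0)) (hv : ∀ j, p (v j) (v (j + 1))) (i : ℕ) :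
    p (seqAppend m u v i) (seqAppend m u v (i + 1)) := by
  rcases lt_trichotomy i m with hi | rfl | hi
  · rw [seqAppend_of_le hi.le, seqAppend_of_le hi]
    exact hu i hi
  · rw [seqAppend_of_le le_rfl, ← zero_add (i + 1), seqAppend_add]
    exact huv
  · obtain ⟨j, rfl⟩ : ∃ j, i = j + (m + 1) := ⟨i - (m + 1), by omega⟩
    rw [add_right_comm, seqAppend_add, seqAppend_add]
    exact hv j

theorem encard_setOf_seqAppend_le (p : α → Prop) :
    {i | p (seqAppend m u v i)}.encard ≤ {i | i ≤ m ∧ p (u i)}.encard + {j | p (v j)}.encard := by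
  have hsub : {i | p (seqAppend m u v i)} ⊆
      {i | i ≤ m ∧ p (u i)} ∪ (· + (m + 1)) '' {j | p (v j)} := by
    intro i (hi : p (seqAppend m u v i))
    rcases le_or_gt i m with him | him
    · rw [seqAppend_of_le him] at hi
      exact Or.inl ⟨him, hi⟩
    · obtain ⟨j, rfl⟩ : ∃ j, i = j + (m + 1) := ⟨i - (m + 1), by omega⟩
      rw [seqAppend_add] at hi
      exact Or.inr ⟨j, hi, rfl⟩
  exact (encard_mono hsub).trans <|
    (encard_union_le _ _).trans (add_le_add_right (encard_image_le _ _) _)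

end SeqAppend

section EntryTime

variable {X : Type*} [PseudoMetricSpace X]

noncomputable def entryTime (γ : ℝ → X) (ρ T : ℝ) : ℝ :=
  sInf {u ∈ Icc 0 T | dist (γ u) (γ T) ≤ ρ}

variable {γ : ℝ → X} {ρ T : ℝ}

theorem entryTime_mem (hT : 0 ≤ T) (hρ : 0 ≤ ρ) (hγ : ContinuousOn γ (Icc 0 T)) :
    entryTime γ ρ T ∈ {u ∈ Icc 0 T | dist (γ u) (γ T) ≤ ρ} := by
  have hclosed : IsClosed {u ∈ Icc 0 T | dist (γ u) (γ T) ≤ ρ} :=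
    ((continuous_id.dist continuous_const).comp_continuousOn hγ).preimage_isClosed_of_isClosed
      isClosed_Icc isClosed_Iic
  exact hclosed.csInf_mem ⟨T, ⟨hT, le_rfl⟩, by simpa using hρ⟩ ⟨0, fun u hu => hu.1.1⟩

theorem lt_dist_of_lt_entryTime {u : ℝ} (hu : 0 ≤ u) (hut : u < entryTime γ ρ T) (huT : u ≤ T) :
    ρ < dist (γ u) (γ T) :=
  lt_of_not_ge fun h => hut.not_ge (csInf_le ⟨0, fun _ hv => hv.1.1⟩ ⟨⟨hu, huT⟩, h⟩)

theorem dist_entryTime_eq (hT : 0 ≤ T) (hρ : 0 ≤ ρ) (hγ : ContinuousOn γ (Icc 0 T))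
    (hpos : 0 < entryTime γ ρ T) : dist (γ (entryTime γ ρ T)) (γ T) = ρ := by
  set τ := entryTime γ ρ T
  have hτ := entryTime_mem hT hρ hγ
  refine le_antisymm hτ.2 ?_
  have hIco : Ico 0 τ ⊆ Icc 0 T := Ico_subset_Icc_self.trans (Icc_subset_Icc le_rfl hτ.1.2)
  have hcont : ContinuousWithinAt (fun u => dist (γ u) (γ T)) (Ico 0 τ) τ :=
    (((continuous_id.dist continuous_const).comp_continuousOn hγ) τ hτ.1).mono hIco
  refine ContinuousWithinAt.closure_le (f := fun _ => ρ) (g := fun u => dist (γ u) (γ T))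
    (x := τ) (by rw [closure_Ico hpos.ne]; exact ⟨hpos.le, le_rfl⟩) continuousWithinAt_const hcont
    fun u hu => ?_
  exact (lt_dist_of_lt_entryTime hu.1 hu.2 (hIco hu).2).le

noncomputable def entryTimes (γ : ℝ → X) (f : X → ℝ) (ℓ : ℝ) : ℕ → ℝ
  | 0 => ℓ
  | i + 1 => entryTime γ (f (γ (entryTimes γ f ℓ i))) (entryTimes γ f ℓ i)

section EntryTimes

variable {f : X → ℝ} {ℓ : ℝ} (hγ : ContinuousOn γ (Icc 0 ℓ)) (hf : ∀ u ∈ Icc 0 ℓ, 0 ≤ f (γ u))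
include hγ hf

theorem entryTimes_succ_mem {i : ℕ} (hi : entryTimes γ f ℓ i ∈ Icc 0 ℓ) :
    entryTimes γ f ℓ (i + 1) ∈ {u ∈ Icc 0 (entryTimes γ f ℓ i) |
      dist (γ u) (γ (entryTimes γ f ℓ i)) ≤ f (γ (entryTimes γ f ℓ i))} :=
  entryTime_mem hi.1 (hf _ hi) (hγ.mono (Icc_subset_Icc le_rfl hi.2))

variable (hℓ : 0 ≤ ℓ)
include hℓ

theorem entryTimes_mem_Icc (i : ℕ) : entryTimes γ f ℓ i ∈ Icc 0 ℓ := by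
  induction i with
  | zero => exact ⟨hℓ, le_rfl⟩
  | succ i ih =>
    have h := (entryTimes_succ_mem hγ hf ih).1
    exact ⟨h.1, h.2.trans ih.2⟩

theorem antitone_entryTimes : Antitone (entryTimes γ f ℓ) :=
  antitone_nat_of_succ_le fun i =>
    (entryTimes_succ_mem hγ hf (entryTimes_mem_Icc hγ hf hℓ i)).1.2

theorem dist_entryTimes_succ_le (i : ℕ) :
    dist (γ (entryTimes γ f ℓ (i + 1))) (γ (entryTimes γ f ℓ i)) ≤ f (γ (entryTimes γ f ℓ i)) :=
  (entryTimes_succ_mem hγ hf (entryTimes_mem_Icc hγ hf hℓ i)).2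

theorem dist_entryTimes_succ_eq {i : ℕ}
    (hi : f (γ (entryTimes γ f ℓ i)) < dist (γ 0) (γ (entryTimes γ f ℓ i))) :
    dist (γ (entryTimes γ f ℓ (i + 1))) (γ (entryTimes γ f ℓ i)) = f (γ (entryTimes γ f ℓ i)) := by
  have hmem := entryTimes_mem_Icc hγ hf hℓ i
  refine dist_entryTime_eq hmem.1 (hf _ hmem) (hγ.mono (Icc_subset_Icc le_rfl hmem.2)) ?_
  refine (entryTimes_mem_Icc hγ hf hℓ (i + 1)).1.lt_of_ne fun h => ?_
  have := dist_entryTimes_succ_le hγ hf hℓ i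
  rw [← h] at this
  exact this.not_gt hi

theorem le_dist_entryTimes {i j : ℕ} (hij : i < j)
    (hi : f (γ (entryTimes γ f ℓ i)) < dist (γ 0) (γ (entryTimes γ f ℓ i))) :
    f (γ (entryTimes γ f ℓ i)) ≤ dist (γ (entryTimes γ f ℓ j)) (γ (entryTimes γ f ℓ i)) := by
  rcases (antitone_entryTimes hγ hf hℓ hij).lt_or_eq with h | h
  · exact (lt_dist_of_lt_entryTime (entryTimes_mem_Icc hγ hf hℓ j).1 h
      (antitone_entryTimes hγ hf hℓ hij.le)).le
  · rw [h, dist_entryTimes_succ_eq hγ hf hℓ hi]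

end EntryTimes

/-- The walk reaches the `f`-ball around `γ 0`: otherwise every step has length
`f (γ (t i))`, which stays away from `0`, while the times `t i` converge. -/
theorem exists_dist_entryTimes_le {f : X → ℝ} {ℓ : ℝ} (hγ : ContinuousOn γ (Icc 0 ℓ))
    (hfc : Continuous f) (hf : ∀ u ∈ Icc 0 ℓ, 0 < f (γ u)) (hℓ : 0 ≤ ℓ) :
    ∃ i, dist (γ 0) (γ (entryTimes γ f ℓ i)) ≤ f (γ (entryTimes γ f ℓ i)) := by
  have hf0 : ∀ u ∈ Icc 0 ℓ, 0 ≤ f (γ u) := fun u hu => (hf u hu).le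
  by_contra! hfar
  set t := entryTimes γ f ℓ
  have hmem := entryTimes_mem_Icc hγ hf0 hℓ
  have htend := tendsto_atTop_ciInf (antitone_entryTimes hγ hf0 hℓ) ⟨0, by
    rintro _ ⟨i, rfl⟩; exact (hmem i).1⟩
  have hτ : ⨅ i, t i ∈ Icc 0 ℓ := isClosed_Icc.mem_of_tendsto htend (Eventually.of_forall hmem)
  have hγt : Tendsto (fun i => γ (t i)) atTop (𝓝 (γ (⨅ i, t i))) :=
    (hγ _ hτ).tendsto.comp (tendsto_nhdsWithin_iff.2 ⟨htend, Eventually.of_forall hmem⟩)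
  have hstep : Tendsto (fun i => dist (γ (t (i + 1))) (γ (t i))) atTop (𝓝 0) := by
    simpa using (hγt.comp (tendsto_add_atTop_nat 1)).dist hγt
  have hstep' : Tendsto (fun i => dist (γ (t (i + 1))) (γ (t i))) atTop
      (𝓝 (f (γ (⨅ i, t i)))) :=
    ((hfc.tendsto _).comp hγt).congr fun i => (dist_entryTimes_succ_eq hγ hf0 hℓ (hfar i)).symm
  exact (hf _ hτ).ne' (tendsto_nhds_unique hstep' hstep)

end EntryTime

/-- `z 0, …, z m` are the centres of the Whitney-type balls `ball (z i) (infDist (z i) F / 2)`. -/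
structure IsWhitneyChain {X : Type*} [PseudoMetricSpace X] (F : Set X) (x : X) (z : ℕ → X)
    (m : ℕ) : Prop where
  dist_succ_le : ∀ i < m, dist (z (i + 1)) (z i) ≤ infDist (z i) F / 4
  le_dist : ∀ i j, i < j → j ≤ m → infDist (z i) F / 4 ≤ dist (z j) (z i)
  dist_le : dist x (z m) ≤ infDist (z m) F / 4

theorem exists_isWhitneyChain_of_curve {X : Type*} [PseudoMetricSpace X] {F : Set X}
    {γ : ℝ → X} {ℓ : ℝ} (hγ : ContinuousOn γ (Icc 0 ℓ)) (hF : ∀ u ∈ Icc 0 ℓ, 0 < infDist (γ u) F)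
    (hℓ : 0 ≤ ℓ) :
    ∃ m : ℕ, ∃ t : ℕ → ℝ, t 0 = ℓ ∧ (∀ i, t i ∈ Icc 0 ℓ) ∧ IsWhitneyChain F (γ 0) (γ ∘ t) m := by
  classical
  have hf : ∀ u ∈ Icc 0 ℓ, 0 < infDist (γ u) F / 4 := fun u hu => by linarith [hF u hu]
  have hf0 : ∀ u ∈ Icc 0 ℓ, 0 ≤ infDist (γ u) F / 4 := fun u hu => (hf u hu).le
  have hex := exists_dist_entryTimes_le hγ ((continuous_infDist_pt F).div_const 4) hf hℓ
  exact ⟨Nat.find hex, _, rfl, entryTimes_mem_Icc hγ hf0 hℓ,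
    fun i _ => dist_entryTimes_succ_le hγ hf0 hℓ i,
    fun i j hij hj =>
      le_dist_entryTimes hγ hf0 hℓ hij (not_le.1 (Nat.find_min hex (hij.trans_le hj))),
    Nat.find_spec hex⟩

section WhitneyBalls

variable {E : Type*} [NormedAddCommGroup E] [NormedSpace ℝ E] [MeasurableSpace E] [BorelSpace E]
  [FiniteDimensional ℝ E] [Nontrivial E] {F : Set E}

/-- A point `y` lies in a ball `ball (z i) (infDist (z i) F / 2)` only if that radius is
comparable to `infDist y F`; separation of the centres at that scale then allows a bounded
number of them in `ball y (infDist y F)`. -/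
theorem encard_setOf_mem_whitneyBall_le {z : ℕ → E} {m : ℕ}
    (hsep : ∀ i j, i < j → j ≤ m → infDist (z i) F / 4 ≤ dist (z j) (z i)) {y : E}
    (hy : 0 < infDist y F) :
    {i | i ≤ m ∧ y ∈ ball (z i) (infDist (z i) F / 2)}.encard ≤ 13 ^ Module.finrank ℝ E := by
  classical
  set T := (Finset.range (m + 1)).filter fun i => y ∈ ball (z i) (infDist (z i) F / 2)
  have hT : {i | i ≤ m ∧ y ∈ ball (z i) (infDist (z i) F / 2)} = T := by
    ext i; simp [T]
  have hcomp : ∀ i ∈ T,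
      infDist (z i) F / 2 < infDist y F ∧ infDist y F < 3 / 2 * infDist (z i) F := by
    intro i hi
    have hyi : dist y (z i) < infDist (z i) F / 2 := (Finset.mem_filter.1 hi).2
    constructor
    · linarith [infDist_le_infDist_add_dist (x := z i) (y := y) (s := F), dist_comm y (z i)]
    · linarith [infDist_le_infDist_add_dist (x := y) (y := z i) (s := F)]
  have hsep' : ∀ i ∈ T, ∀ j ∈ T, i ≠ j → 2 * (infDist y F / 12) ≤ dist (z i) (z j) := by
    intro i hi j hj hij
    rcases hij.lt_or_gt with h | h
    · linarith [hsep i j h (Finset.mem_range_succ_iff.1 (Finset.mem_filter.1 hj).1),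
        (hcomp i hi).2, dist_comm (z i) (z j)]
    · linarith [hsep j i h (Finset.mem_range_succ_iff.1 (Finset.mem_filter.1 hi).1),
        (hcomp j hj).2]
  have hcard := T.card_le_of_dist_lt_of_le_dist z y hy.le (by positivity)
    (fun i hi => by linarith [(Finset.mem_filter.1 hi).2.out, dist_comm y (z i), (hcomp i hi).1])
    hsep'
  have h13 : (infDist y F + infDist y F / 12) / (infDist y F / 12) = 13 := by
    field_simp; ring
  rw [h13] at hcard
  rw [hT, encard_coe_eq_coe_finsetCard]
  exact_mod_cast hcard

theorem measure_whitneyBall_union_le (μ : Measure E) [μ.IsAddHaarMeasure] {z z' : E}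
    (hz : 0 < infDist z F) (hzz' : dist z' z ≤ infDist z F / 4) :
    μ (ball z (infDist z F / 2) ∪ ball z' (infDist z' F / 2)) ≤
      ENNReal.ofReal (5 ^ Module.finrank ℝ E) *
        μ (ball z (infDist z F / 2) ∩ ball z' (infDist z' F / 2)) := by
  have h₁ := infDist_le_infDist_add_dist (x := z) (y := z') (s := F)
  have h₂ := infDist_le_infDist_add_dist (x := z') (y := z) (s := F)
  convert measure_ball_union_le_mul_measure_ball_inter μ (c := z) (c' := z')
    (r := infDist z F / 2) (r' := infDist z' F / 2) (h := infDist z F / 4) (κ := 5 / 2)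
    (by positivity) (by linarith [dist_comm z z']) (by linarith [dist_comm z z'])
    (by linarith) (by linarith) using 3
  norm_num

end WhitneyBalls

section Tower

noncomputable def towerRadius (ρ₀ : ℝ) (j : ℕ) : ℝ := ρ₀ * (4 / 5) ^ j

variable {ρ₀ : ℝ}

theorem towerRadius_pos (hρ₀ : 0 < ρ₀) (j : ℕ) : 0 < towerRadius ρ₀ j := by
  unfold towerRadius; positivity

theorem towerRadius_nonneg (hρ₀ : 0 ≤ ρ₀) (j : ℕ) : 0 ≤ towerRadius ρ₀ j := by
  unfold towerRadius; positivity

theorem towerRadius_le (hρ₀ : 0 ≤ ρ₀) (j : ℕ) : towerRadius ρ₀ j ≤ ρ₀ :=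
  mul_le_of_le_one_right hρ₀ (pow_le_one₀ (by norm_num) (by norm_num))

theorem towerRadius_add (j k : ℕ) : towerRadius ρ₀ (j + k) = (4 / 5) ^ k * towerRadius ρ₀ j := by
  unfold towerRadius; ring

theorem tendsto_towerRadius (ρ₀ : ℝ) : Tendsto (towerRadius ρ₀) atTop (𝓝 0) := by
  show Tendsto (fun j => ρ₀ * (4 / 5 : ℝ) ^ j) atTop (𝓝 0)
  simpa using (tendsto_pow_atTop_nhds_zero_of_lt_one (by norm_num : (0 : ℝ) ≤ 4 / 5)
    (by norm_num)).const_mul ρ₀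

variable {E : Type*} [NormedAddCommGroup E] [NormedSpace ℝ E]

noncomputable def towerCenter (x e : E) (ρ₀ : ℝ) (j : ℕ) : E := x + (2 * towerRadius ρ₀ j) • e

variable {x e : E}

theorem dist_towerCenter_self (he : ‖e‖ = 1) (hρ₀ : 0 ≤ ρ₀) (j : ℕ) :
    dist (towerCenter x e ρ₀ j) x = 2 * towerRadius ρ₀ j := by
  have := towerRadius_nonneg hρ₀ j
  rw [towerCenter, dist_self_add_left, norm_smul, he, mul_one, Real.norm_of_nonneg (by positivity)]

theorem dist_towerCenter_succ (he : ‖e‖ = 1) (hρ₀ : 0 ≤ ρ₀) (j : ℕ) :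
    dist (towerCenter x e ρ₀ j) (towerCenter x e ρ₀ (j + 1)) = 2 / 5 * towerRadius ρ₀ j := by
  have := towerRadius_nonneg hρ₀ j
  rw [towerCenter, towerCenter, dist_add_left, dist_eq_norm, ← sub_smul, norm_smul, he, mul_one,
    towerRadius_add, Real.norm_of_nonneg (by linarith)]
  ring

theorem ball_towerCenter_subset (he : ‖e‖ = 1) (hρ₀ : 0 ≤ ρ₀) (j : ℕ) :
    ball (towerCenter x e ρ₀ j) (2 * towerRadius ρ₀ j) ⊆ ball x (4 * ρ₀) := fun w hw => by
  rw [mem_ball] at hw ⊢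
  linarith [dist_triangle w (towerCenter x e ρ₀ j) x, dist_towerCenter_self (x := x) he hρ₀ j,
    towerRadius_le hρ₀ j]

theorem infDist_ball_towerCenter_le (he : ‖e‖ = 1) (hρ₀ : 0 < ρ₀) (j : ℕ) :
    infDist x (ball (towerCenter x e ρ₀ j) (towerRadius ρ₀ j)) ≤ towerRadius ρ₀ j := by
  have hρ := towerRadius_pos hρ₀ j
  have hmem : x + towerRadius ρ₀ j • e ∈ closedBall (towerCenter x e ρ₀ j) (towerRadius ρ₀ j) := by
    rw [mem_closedBall, towerCenter, dist_add_left, dist_eq_norm, ← sub_smul, norm_smul, he,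
      mul_one, Real.norm_of_nonpos (by linarith)]
    linarith
  rw [← infDist_closure, closure_ball _ hρ.ne']
  refine (infDist_le_dist_of_mem hmem).trans_eq ?_
  rw [dist_self_add_right, norm_smul, he, mul_one, Real.norm_of_nonneg hρ.le]

theorem encard_setOf_mem_ball_towerCenter_le (he : ‖e‖ = 1) (hρ₀ : 0 ≤ ρ₀) (y : E) :
    {j | y ∈ ball (towerCenter x e ρ₀ j) (towerRadius ρ₀ j)}.encard ≤ 5 := by
  have hwindow : ∀ j, y ∈ ball (towerCenter x e ρ₀ j) (towerRadius ρ₀ j) →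
      towerRadius ρ₀ j < dist y x ∧ dist y x < 3 * towerRadius ρ₀ j := fun j hj => by
    rw [mem_ball] at hj
    have := dist_towerCenter_self (x := x) he hρ₀ j
    constructor
    · linarith [dist_triangle (towerCenter x e ρ₀ j) y x, dist_comm y (towerCenter x e ρ₀ j)]
    · linarith [dist_triangle y (towerCenter x e ρ₀ j) x]
  -- so the radii of the balls containing `y` lie in a window of ratio `3 > (5 / 4) ^ 5`
  refine encard_le_of_forall_lt_add fun i hi j hj => lt_of_not_ge fun hij => ?_
  obtain ⟨k, rfl⟩ := Nat.exists_eq_add_of_le hij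
  have hdecay : towerRadius ρ₀ (i + 5 + k) ≤ 1024 / 3125 * towerRadius ρ₀ i := by
    rw [towerRadius_add, towerRadius_add]
    have := towerRadius_nonneg hρ₀ i
    have : ((4 : ℝ) / 5) ^ k ≤ 1 := pow_le_one₀ (by norm_num) (by norm_num)
    norm_num
    nlinarith
  linarith [(hwindow i hi).1, (hwindow _ hj).2, towerRadius_nonneg hρ₀ i]

theorem measure_ball_towerCenter_union_le [MeasurableSpace E] [BorelSpace E] [FiniteDimensional ℝ E]
    [Nontrivial E] (μ : Measure E) [μ.IsAddHaarMeasure] (he : ‖e‖ = 1) (hρ₀ : 0 < ρ₀) (j : ℕ) :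
    μ (ball (towerCenter x e ρ₀ j) (towerRadius ρ₀ j) ∪
        ball (towerCenter x e ρ₀ (j + 1)) (towerRadius ρ₀ (j + 1))) ≤
      ENNReal.ofReal (5 ^ Module.finrank ℝ E) *
        μ (ball (towerCenter x e ρ₀ j) (towerRadius ρ₀ j) ∩
          ball (towerCenter x e ρ₀ (j + 1)) (towerRadius ρ₀ (j + 1))) := by
  have hρ := towerRadius_pos hρ₀ j
  have hsucc : towerRadius ρ₀ (j + 1) = 4 / 5 * towerRadius ρ₀ j := by
    rw [towerRadius_add, pow_one]
  convert measure_ball_union_le_mul_measure_ball_inter μ (c := towerCenter x e ρ₀ j)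
    (c' := towerCenter x e ρ₀ (j + 1)) (r := towerRadius ρ₀ j) (r' := towerRadius ρ₀ (j + 1))
    (h := 2 / 5 * towerRadius ρ₀ j) (κ := 5 / 2) (by positivity)
    (by rw [dist_towerCenter_succ he hρ₀.le]; linarith) (by linarith) (by linarith) (by linarith)
    using 3
  norm_num

theorem measure_whitneyBall_union_ball_towerCenter_le [MeasurableSpace E] [BorelSpace E]
    [FiniteDimensional ℝ E] [Nontrivial E] (μ : Measure E) [μ.IsAddHaarMeasure] {F : Set E} {z : E}
    {κ : ℝ} (he : ‖e‖ = 1) (hρ₀ : 0 < ρ₀) (hρ₀z : ρ₀ ≤ infDist z F / 10)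
    (hxz : dist x z ≤ infDist z F / 4) (hκ : infDist z F ≤ κ * ρ₀) :
    μ (ball z (infDist z F / 2) ∪ ball (towerCenter x e ρ₀ 0) (towerRadius ρ₀ 0)) ≤
      ENNReal.ofReal ((2 * κ) ^ Module.finrank ℝ E) *
        μ (ball z (infDist z F / 2) ∩ ball (towerCenter x e ρ₀ 0) (towerRadius ρ₀ 0)) := by
  have h0 : towerRadius ρ₀ 0 = ρ₀ := by simp [towerRadius]
  have hdist : dist z (towerCenter x e ρ₀ 0) ≤ infDist z F / 4 + 2 * ρ₀ := by
    have := dist_towerCenter_self (x := x) he hρ₀.le 0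
    rw [h0] at this
    linarith [dist_triangle z x (towerCenter x e ρ₀ 0), dist_comm x z,
      dist_comm x (towerCenter x e ρ₀ 0)]
  rw [h0]
  exact measure_ball_union_le_mul_measure_ball_inter μ (h := ρ₀ / 2) (by positivity)
    (by linarith) (by linarith) (by linarith) (by nlinarith)

end Tower

section Chain

/-- The radius of the first tower ball; the cap `1` makes `r ^ s ≤ r` on the tower. -/
noncomputable def towerStart (d : ℝ) : ℝ := min 1 (d / 10)

theorem towerStart_pos {d : ℝ} (hd : 0 < d) : 0 < towerStart d :=
  lt_min one_pos (by linarith)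

theorem towerStart_le_one (d : ℝ) : towerStart d ≤ 1 := min_le_left _ _

theorem towerStart_le (d : ℝ) : towerStart d ≤ d / 10 := min_le_right _ _

theorem le_mul_towerStart {d Λ : ℝ} (hd : 0 ≤ d) (hΛ : d ≤ Λ) : d ≤ (10 + Λ) * towerStart d := by
  rcases le_total 1 (d / 10) with h | h
  · rw [towerStart, min_eq_left h]
    linarith
  · rw [towerStart, min_eq_right h]
    nlinarith

variable {E : Type*} [NormedAddCommGroup E] [NormedSpace ℝ E]

/-- Balls as pairs (centre, radius): the Whitney balls of `z`, then the tower at `x`. -/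
noncomputable def chainBalls (F : Set E) (x e : E) (z : ℕ → E) (m : ℕ) : ℕ → E × ℝ :=
  seqAppend m (fun i => (z i, infDist (z i) F / 2)) fun j =>
    (towerCenter x e (towerStart (infDist (z m) F)) j, towerRadius (towerStart (infDist (z m) F)) j)

variable {F : Set E} {x e : E} {z : ℕ → E} {m : ℕ}

theorem chainBalls_zero : chainBalls F x e z m 0 = (z 0, infDist (z 0) F / 2) :=
  seqAppend_of_le (Nat.zero_le m)

theorem tendsto_chainBalls_snd : Tendsto (fun i => (chainBalls F x e z m i).2) atTop (𝓝 0) :=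
  (tendsto_add_atTop_iff_nat (m + 1)).1 <| by
    simpa only [chainBalls, seqAppend_add] using tendsto_towerRadius _

theorem chainBalls_subset {D : Set E} (hD : IsOpen D) (he : ‖e‖ = 1)
    (hW : IsWhitneyChain (frontier D) x z m) (hzD : ∀ i ≤ m, z i ∈ D)
    (hδ : ∀ i ≤ m, 0 < infDist (z i) (frontier D)) (i : ℕ) :
    0 < (chainBalls (frontier D) x e z m i).2 ∧
      ball (chainBalls (frontier D) x e z m i).1 (2 * (chainBalls (frontier D) x e z m i).2) ⊆
        D := by
  have hρ₀ := towerStart_pos (hδ m le_rfl)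
  have htowerD : ball x (4 * towerStart (infDist (z m) (frontier D))) ⊆ D :=
    (ball_subset_ball' (by linarith [hW.dist_le, towerStart_le (infDist (z m) (frontier D))])).trans
      (ball_subset_of_le_infDist_frontier hD (hzD m le_rfl) le_rfl)
  exact forall_seqAppend (p := fun B : E × ℝ => 0 < B.2 ∧ ball B.1 (2 * B.2) ⊆ D)
    (fun i hi => ⟨by linarith [hδ i hi],
      ball_subset_of_le_infDist_frontier hD (hzD i hi) (by linarith)⟩)
    (fun j => ⟨towerRadius_pos hρ₀ j, (ball_towerCenter_subset he hρ₀.le j).trans htowerD⟩) i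

variable (he : ‖e‖ = 1) (hδ : ∀ i ≤ m, 0 < infDist (z i) F)
include he hδ

theorem infDist_chainBalls_rpow_le {s A : ℝ} (hs : 1 ≤ s) (hA : 0 ≤ A)
    (hzx : ∀ i ≤ m, dist x (z i) ^ s ≤ A * infDist (z i) F) (i : ℕ) :
    infDist x (ball (chainBalls F x e z m i).1 (chainBalls F x e z m i).2) ^ s ≤
      (2 * A + 1) * (chainBalls F x e z m i).2 := by
  refine forall_seqAppend (p := fun B : E × ℝ => infDist x (ball B.1 B.2) ^ s ≤ (2 * A + 1) * B.2)
    (fun i hi => ?_) (fun j => ?_) i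
  · calc infDist x (ball (z i) (infDist (z i) F / 2)) ^ s ≤ dist x (z i) ^ s :=
          Real.rpow_le_rpow infDist_nonneg
            (infDist_le_dist_of_mem (mem_ball_self (by linarith [hδ i hi]))) (by linarith)
      _ ≤ A * infDist (z i) F := hzx i hi
      _ ≤ (2 * A + 1) * (infDist (z i) F / 2) := by nlinarith [hδ i hi]
  · set ρ₀ := towerStart (infDist (z m) F)
    have hρ₀ : 0 < ρ₀ := towerStart_pos (hδ m le_rfl)
    have hρ := towerRadius_nonneg hρ₀.le j
    calc infDist x (ball (towerCenter x e ρ₀ j) (towerRadius ρ₀ j)) ^ s ≤ towerRadius ρ₀ j ^ s :=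
          Real.rpow_le_rpow infDist_nonneg (infDist_ball_towerCenter_le he hρ₀ j) (by linarith)
      _ ≤ towerRadius ρ₀ j := Real.rpow_le_self_of_le_one hρ
          ((towerRadius_le hρ₀.le j).trans (towerStart_le_one _)) hs
      _ ≤ (2 * A + 1) * towerRadius ρ₀ j := le_mul_of_one_le_left hρ (by linarith)

variable [MeasurableSpace E] [BorelSpace E] [FiniteDimensional ℝ E] [Nontrivial E]

theorem encard_setOf_mem_ball_chainBalls_le (hW : IsWhitneyChain F x z m) {y : E}
    (hy : 0 < infDist y F) :
    {i | y ∈ ball (chainBalls F x e z m i).1 (chainBalls F x e z m i).2}.encard ≤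
      (13 ^ Module.finrank ℝ E + 5 : ℕ) := by
  push_cast
  exact (encard_setOf_seqAppend_le (fun B : E × ℝ => y ∈ ball B.1 B.2)).trans <|
    add_le_add (encard_setOf_mem_whitneyBall_le hW.le_dist hy)
      (encard_setOf_mem_ball_towerCenter_le he (towerStart_pos (hδ m le_rfl)).le y)

theorem measure_chainBalls_union_le (μ : Measure E) [μ.IsAddHaarMeasure]
    (hW : IsWhitneyChain F x z m) {Λ : ℝ} (hΛ : infDist (z m) F ≤ Λ) (i : ℕ) :
    μ (ball (chainBalls F x e z m i).1 (chainBalls F x e z m i).2 ∪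
        ball (chainBalls F x e z m (i + 1)).1 (chainBalls F x e z m (i + 1)).2) ≤
      ENNReal.ofReal ((2 * (10 + Λ)) ^ Module.finrank ℝ E) *
        μ (ball (chainBalls F x e z m i).1 (chainBalls F x e z m i).2 ∩
          ball (chainBalls F x e z m (i + 1)).1 (chainBalls F x e z m (i + 1)).2) := by
  have hδm := hδ m le_rfl
  have hρ₀ := towerStart_pos hδm
  refine forall_seqAppend_succ (p := fun B B' : E × ℝ => μ (ball B.1 B.2 ∪ ball B'.1 B'.2) ≤
      ENNReal.ofReal ((2 * (10 + Λ)) ^ Module.finrank ℝ E) * μ (ball B.1 B.2 ∩ ball B'.1 B'.2))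
    (fun i hi => ?_) ?_ (fun j => ?_) i
  · exact (measure_whitneyBall_union_le μ (hδ i hi.le) (hW.dist_succ_le i hi)).trans
      (by gcongr; linarith)
  · exact measure_whitneyBall_union_ball_towerCenter_le μ he hρ₀ (towerStart_le _) hW.dist_le
      (le_mul_towerStart hδm.le hΛ)
  · exact (measure_ball_towerCenter_union_le μ he hρ₀ j).trans (by gcongr; linarith)

end Chain

theorem exists_ball_chain_of_lipschitz_curve {E : Type*} [NormedAddCommGroup E]
    [NormedSpace ℝ E] [MeasurableSpace E] [BorelSpace E] [FiniteDimensional ℝ E] [Nontrivial E]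
    (μ : Measure E) [μ.IsAddHaarMeasure] {D : Set E} (hD : IsOpen D) (hF : (frontier D).Nonempty)
    {x x₀ : E} {γ : ℝ → E} {ℓ L A s : ℝ} (hγ : LipschitzOnWith 1 γ (Icc 0 ℓ)) (hγ0 : γ 0 = x)
    (hγℓ : γ ℓ = x₀) (hγD : ∀ u ∈ Icc 0 ℓ, γ u ∈ D)
    (hJ : ∀ u ∈ Icc 0 ℓ, u ^ s ≤ A * infDist (γ u) (frontier D)) (hℓ : 0 ≤ ℓ) (hℓL : ℓ ≤ L)
    (hs : 1 ≤ s) (hA : 0 ≤ A) :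
    ∃ (c : ℕ → E) (r : ℕ → ℝ),
      (∀ i, 0 < r i ∧ ball (c i) (2 * r i) ⊆ D) ∧
      c 0 = x₀ ∧ r 0 = infDist x₀ (frontier D) / 2 ∧
      (∀ i, infDist x (ball (c i) (r i)) ^ s ≤ (2 * A + 1) * r i) ∧
      Tendsto r atTop (𝓝 0) ∧
      (∀ y ∈ D, {i | y ∈ ball (c i) (r i)}.encard ≤ (13 ^ Module.finrank ℝ E + 5 : ℕ)) ∧
      ∀ i, μ (ball (c i) (r i) ∪ ball (c (i + 1)) (r (i + 1))) ≤
        ENNReal.ofReal ((2 * (10 + (L + infDist x₀ (frontier D)))) ^ Module.finrank ℝ E) *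
          μ (ball (c i) (r i) ∩ ball (c (i + 1)) (r (i + 1))) := by
  subst hγ0 hγℓ
  obtain ⟨m, t, ht0, ht, hW⟩ := exists_isWhitneyChain_of_curve hγ.continuousOn
    (fun u hu => infDist_frontier_pos hD hF (hγD u hu)) hℓ
  have hδ : ∀ i ≤ m, 0 < infDist (γ (t i)) (frontier D) := fun i _ =>
    infDist_frontier_pos hD hF (hγD _ (ht i))
  have hlen : ∀ u ∈ Icc 0 ℓ, ∀ v ∈ Icc 0 ℓ, dist (γ u) (γ v) ≤ |u - v| := fun u hu v hv => by
    simpa [Real.dist_eq] using hγ.dist_le_mul u hu v hv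
  have hzx : ∀ i ≤ m, dist (γ 0) (γ (t i)) ^ s ≤ A * infDist (γ (t i)) (frontier D) :=
    fun i _ => by
      have := hlen 0 ⟨le_rfl, hℓ⟩ (t i) (ht i)
      rw [zero_sub, abs_neg, abs_of_nonneg (ht i).1] at this
      exact (Real.rpow_le_rpow dist_nonneg this (by linarith)).trans (hJ _ (ht i))
  have hΛ : infDist (γ (t m)) (frontier D) ≤ L + infDist (γ ℓ) (frontier D) := by
    have := hlen (t m) (ht m) ℓ ⟨hℓ, le_rfl⟩
    rw [abs_of_nonpos (by linarith [(ht m).2])] at this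
    linarith [infDist_le_infDist_add_dist (x := γ (t m)) (y := γ ℓ) (s := frontier D), (ht m).1]
  obtain ⟨e, he⟩ := exists_norm_eq E zero_le_one
  set B := chainBalls (frontier D) (γ 0) e (γ ∘ t) m
  have hB0 : B 0 = (γ ℓ, infDist (γ ℓ) (frontier D) / 2) := by
    simp only [B, chainBalls_zero, Function.comp_apply, ht0]
  exact ⟨fun i => (B i).1, fun i => (B i).2,
    chainBalls_subset hD he hW (fun i _ => hγD _ (ht i)) hδ,
    congrArg Prod.fst hB0, congrArg Prod.snd hB0, infDist_chainBalls_rpow_le he hδ hs hA hzx,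
    tendsto_chainBalls_snd, fun y hy => encard_setOf_mem_ball_chainBalls_le he hδ hW
      (infDist_frontier_pos hD hF hy), measure_chainBalls_union_le he hδ μ hW hΛ⟩

/-- Chaining lemma for `s(·)`-John domains (Lemma 5.3). -/
theorem john_chain {n : ℕ} (hn : 2 ≤ n)
    (D : Set (EuclideanSpace ℝ (Fin n)))
    (s : EuclideanSpace ℝ (Fin n) → ℝ) (a b : ℝ)
    (x₀ : EuclideanSpace ℝ (Fin n))
    (hD : IsJohnDomain D s a b x₀) (hs : ∀ x ∈ D, 1 ≤ s x) :
    ∃ K : ℝ, 0 < K ∧ ∃ N : ℕ, ∃ M : ℝ, 0 < M ∧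
      ∀ x ∈ D \ Metric.ball x₀ (Metric.infDist x₀ (frontier D)),
        ∃ (c : ℕ → EuclideanSpace ℝ (Fin n)) (r : ℕ → ℝ),
          (∀ i, 0 < r i ∧ Metric.ball (c i) (2 * r i) ⊆ D) ∧
          -- (1)
          c 0 = x₀ ∧ r 0 = Metric.infDist x₀ (frontier D) / 2 ∧
          -- (2)
          (∀ i, Metric.infDist x (Metric.ball (c i) (r i)) ^ s x ≤ K * r i) ∧
          Filter.Tendsto r Filter.atTop (nhds 0) ∧
          -- (3)
          (∀ y ∈ D, {i | y ∈ Metric.ball (c i) (r i)}.encard ≤ N) ∧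
          -- (4)
          (∀ i, volume (Metric.ball (c i) (r i) ∪ Metric.ball (c (i + 1)) (r (i + 1)))
            ≤ ENNReal.ofReal M *
              volume (Metric.ball (c i) (r i) ∩ Metric.ball (c (i + 1)) (r (i + 1)))) := by
  obtain ⟨hDopen, -, hDbdd, ha, hab, hx₀, hJohn⟩ := hD
  have : Nonempty (Fin n) := ⟨⟨0, by omega⟩⟩
  have hF := frontier_nonempty_of_isBounded ⟨x₀, hx₀⟩ hDbdd
  have hba : 0 ≤ b / a := div_nonneg (ha.le.trans hab) ha.le
  have hd : 0 ≤ infDist x₀ (frontier D) := infDist_nonneg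
  refine ⟨2 * (b / a) + 1, by linarith, 13 ^ Module.finrank ℝ (EuclideanSpace ℝ (Fin n)) + 5,
    (2 * (10 + (b + infDist x₀ (frontier D)))) ^ Module.finrank ℝ (EuclideanSpace ℝ (Fin n)),
    pow_pos (by linarith [ha.trans_le hab]) _, fun x hx => ?_⟩
  obtain ⟨ℓ, hℓ, hℓb, γ, hγ0, hγℓ, hγ, hγD, hγJ⟩ := hJohn x hx.1
  exact exists_ball_chain_of_lipschitz_curve volume hDopen hF hγ hγ0 hγℓ hγD hγJ hℓ hℓb
    (hs x hx.1) hba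
end
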